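/- There exists a constant c > 0 (depending only on the bounded Vilenkin sequence m) such that for all A ∈ ℕ and all x ∈ G_m, |K_{M_A}(x)| ≤ c ∑_{s=0}^{A} (M_s/M_A) ∑_{x_s=1}^{m_s-1} D_{M_A}(x − x_s e_s), where e_s is the element of G_m whose s-th coordinate is 1 and all other coordinates are 0. -/

import Mathlib

open Complex Finset

noncomputable section

/-- The generalized number system: `M 0 = 1`, `M (k+1) = m k * M k`. -/
def Mf (m : ℕ → ℕ) : ℕ → ℕ
  | 0 => 1
  | k + 1 => m k * Mf m k

/-- The generalized Rademacher function `r_k(x) = exp(2πi x_k / m_k)`. -/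
def rad (m : ℕ → ℕ) (k : ℕ) (x : ∀ j, ZMod (m j)) : ℂ :=
  Complex.exp (2 * Real.pi * Complex.I * (x k).val / (m k))

/-- The Vilenkin function `ψ_n(x) = ∏ k, r_k(x)^{n_k}` where `n_k = (n / M_k) % m_k`
is the k-th digit of `n` in the generalized number system. -/
def psi (m : ℕ → ℕ) (n : ℕ) (x : ∀ j, ZMod (m j)) : ℂ :=
  ∏ k ∈ Finset.range (n + 1), rad m k x ^ ((n / Mf m k) % m k)

/-- Vilenkin Dirichlet kernel. -/
def Dker (m : ℕ → ℕ) (n : ℕ) (x : ∀ j, ZMod (m j)) : ℂ :=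
  ∑ j ∈ Finset.range n, psi m j x

/-- One-dimensional Vilenkin Fejér kernel. -/
def Fejer (m : ℕ → ℕ) (n : ℕ) (x : ∀ j, ZMod (m j)) : ℂ :=
  (n : ℂ)⁻¹ * ∑ k ∈ Finset.range n, Dker m k x

/-- Two-dimensional Marcinkiewicz–Fejér kernel. -/
def MKer (m : ℕ → ℕ) (n : ℕ) (x y : ∀ j, ZMod (m j)) : ℂ :=
  (n : ℂ)⁻¹ * ∑ k ∈ Finset.range n, Dker m k x * Dker m k y

/-- `e_s ∈ G_m`: the element whose s-th coordinate is 1 and all others are 0. -/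
def evec (m : ℕ → ℕ) (s : ℕ) : ∀ j, ZMod (m j) :=
  fun j => if j = s then 1 else 0

/-- `r_{i,n}(x,y) = ∏_{l=i}^{n} ∑_{s=0}^{m_l-1} ψ_{M_l}(x+y)^s`. -/
def rr (m : ℕ → ℕ) (i n : ℕ) (x y : ∀ j, ZMod (m j)) : ℂ :=
  ∏ l ∈ Finset.Icc i n, ∑ s ∈ Finset.range (m l), psi m (Mf m l) (x + y) ^ s

/-!
Write `S_n = ∑_{k<n} D_k`, `E_j = ∑_{k<m_j} r_j^k` and `T_j = ∑_{k<m_j} ∑_{l<k} r_j^l`.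
Splitting `k < M_{j+1}` by its digit at position `j` gives `D_{M_A} = ∏_{j<A} E_j` and
`S_{M_{j+1}} = M_j D_{M_j} T_j + E_j S_{M_j}`, while `E_j(x)` is `m_j` or `0` according as
`x_j = 0` or not. If `x_t ≠ 0` for some `t < A`, these give
`m_t S_{M_A}(x) = M_t T_t(x) D_{M_A}(x - x_t e_t)`, so
`|K_{M_A}(x)| ≤ m_t (M_t / M_A) |D_{M_A}(x - x_t e_t)|`, which is `m_t ≤ B`
times a term of the right-hand side. Otherwise `|K_{M_A}(x)| ≤ M_A = |D_{M_A}(x - e_A)|`, the term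
`s = A`, `v = 1`.
-/

lemma sum_range_mul_eq_sum_sum {α : Type*} [AddCommMonoid α] (f : ℕ → α) (a b : ℕ) :
    ∑ n ∈ range (a * b), f n = ∑ k ∈ range a, ∑ q ∈ range b, f (k * b + q) := by
  induction a with
  | zero => simp
  | succ a ih => rw [sum_range_succ, ← ih, Nat.succ_mul, sum_range_add]

section Vilenkin

variable {m : ℕ → ℕ}

lemma Mf_succ (k : ℕ) : Mf m (k + 1) = m k * Mf m k := rfl

lemma Mf_pos (hm : ∀ k, 0 < m k) (k : ℕ) : 0 < Mf m k := by
  induction k with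
  | zero => exact Nat.one_pos
  | succ k ih => exact Nat.mul_pos (hm k) ih

lemma lt_Mf (hm : ∀ k, 2 ≤ m k) (k : ℕ) : k < Mf m k := by
  induction k with
  | zero => exact Nat.one_pos
  | succ k ih => rw [Mf_succ]; nlinarith [hm k]

lemma Mf_dvd_Mf {a b : ℕ} (h : a ≤ b) : Mf m a ∣ Mf m b := by
  induction b, h using Nat.le_induction with
  | base => exact dvd_rfl
  | succ b _ ih => exact ih.mul_left (m b)

lemma Mf_eq_prod_range (A : ℕ) : Mf m A = ∏ j ∈ range A, m j := by
  induction A with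
  | zero => rfl
  | succ A ih => rw [Mf_succ, ih, prod_range_succ, mul_comm]

def digit (m : ℕ → ℕ) (n k : ℕ) : ℕ := (n / Mf m k) % m k

lemma digit_mul_Mf_add (hm : ∀ k, 2 ≤ m k) {j k q : ℕ} (hq : q < Mf m j) (hk : k < m j)
    (i : ℕ) : digit m (k * Mf m j + q) i = digit m q i + if i = j then k else 0 := by
  have hm0 : ∀ k, 0 < m k := fun k => Nat.zero_lt_two.trans_le (hm k)
  rcases lt_trichotomy i j with h | rfl | h
  · obtain ⟨c, hc⟩ := Mf_dvd_Mf (m := m) (Nat.succ_le_of_lt h)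
    have : k * Mf m j = k * c * m i * Mf m i := by rw [hc, Mf_succ]; ring
    rw [if_neg h.ne, add_zero, digit, digit, this, add_comm,
      Nat.add_mul_div_right _ _ (Mf_pos hm0 i), Nat.add_mul_mod_self_right]
  · rw [if_pos rfl, digit, digit, add_comm, Nat.add_mul_div_right _ _ (Mf_pos hm0 i),
      Nat.div_eq_of_lt hq, zero_add, Nat.zero_mod, zero_add, Nat.mod_eq_of_lt hk]
  · have hlt : k * Mf m j + q < Mf m i :=
      calc k * Mf m j + q < (k + 1) * Mf m j := by rw [Nat.succ_mul]; omega
        _ ≤ Mf m (j + 1) := by rw [Mf_succ]; exact Nat.mul_le_mul_right _ hk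
        _ ≤ Mf m i := Nat.le_of_dvd (Mf_pos hm0 i) (Mf_dvd_Mf h)
    rw [if_neg h.ne', add_zero, digit, digit, Nat.div_eq_of_lt hlt,
      Nat.div_eq_of_lt (lt_of_le_of_lt (Nat.le_add_left _ _) hlt)]

lemma psi_eq_prod_range (hm : ∀ k, 2 ≤ m k) {n N : ℕ} (hN : n < N) (x : ∀ j, ZMod (m j)) :
    psi m n x = ∏ k ∈ range N, rad m k x ^ digit m n k := by
  rw [psi, ← prod_range_mul_prod_Ico _ hN, prod_eq_one (s := Ico (n + 1) N) fun k hk => ?_,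
    mul_one]
  · rfl
  · rw [digit, Nat.div_eq_of_lt ((Nat.lt_of_succ_le (mem_Ico.1 hk).1).trans (lt_Mf hm k)),
      Nat.zero_mod, pow_zero]

lemma psi_mul_Mf_add (hm : ∀ k, 2 ≤ m k) {j k q : ℕ} (hq : q < Mf m j) (hk : k < m j)
    (x : ∀ i, ZMod (m i)) : psi m (k * Mf m j + q) x = rad m j x ^ k * psi m q x := by
  have hj : j < k * Mf m j + q + j + 1 := by omega
  rw [psi_eq_prod_range hm (by omega : k * Mf m j + q < k * Mf m j + q + j + 1) x,
    psi_eq_prod_range hm (by omega : q < k * Mf m j + q + j + 1) x]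
  have hsplit : ∀ i, rad m i x ^ digit m (k * Mf m j + q) i =
      rad m i x ^ digit m q i * if i = j then rad m j x ^ k else 1 := by
    intro i
    rw [digit_mul_Mf_add hm hq hk, pow_add]
    split_ifs with h
    · rw [h]
    · rw [pow_zero]
  rw [prod_congr rfl fun i _ => hsplit i, prod_mul_distrib, prod_ite_eq', if_pos (mem_range.2 hj),
    mul_comm]

lemma psi_zero (x : ∀ i, ZMod (m i)) : psi m 0 x = 1 := by simp [psi]

lemma rad_congr {x y : ∀ i, ZMod (m i)} {j : ℕ} (h : x j = y j) : rad m j x = rad m j y := by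
  rw [rad, rad, h]

lemma rad_eq_pow (x : ∀ i, ZMod (m i)) (j : ℕ) :
    rad m j x = exp (2 * Real.pi * I / m j) ^ (x j).val := by
  rw [rad, ← exp_nat_mul]
  ring_nf

lemma norm_rad (x : ∀ i, ZMod (m i)) (j : ℕ) : ‖rad m j x‖ = 1 := by
  rw [rad, show 2 * Real.pi * I * ((x j).val : ℂ) / (m j : ℂ) =
      ((2 * Real.pi * (x j).val / m j : ℝ) : ℂ) * I by push_cast; ring,
    norm_exp_ofReal_mul_I]

lemma rad_pow_self (x : ∀ i, ZMod (m i)) (j : ℕ) : rad m j x ^ m j = 1 := by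
  rcases eq_or_ne (m j) 0 with h | h
  · rw [h, pow_zero]
  · rw [rad_eq_pow, ← pow_mul, mul_comm (x j).val, pow_mul, (isPrimitiveRoot_exp _ h).pow_eq_one,
      one_pow]

lemma rad_ne_one {x : ∀ i, ZMod (m i)} {j : ℕ} (hmj : m j ≠ 0) (h : x j ≠ 0) :
    rad m j x ≠ 1 := by
  have : NeZero (m j) := ⟨hmj⟩
  rw [rad_eq_pow, Ne, (isPrimitiveRoot_exp _ hmj).pow_eq_one_iff_dvd]
  exact Nat.not_dvd_of_pos_of_lt (ZMod.val_pos.2 h) (ZMod.val_lt _)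

def radSum (m : ℕ → ℕ) (j : ℕ) (x : ∀ i, ZMod (m i)) : ℂ :=
  ∑ k ∈ range (m j), rad m j x ^ k

def radCumSum (m : ℕ → ℕ) (j : ℕ) (x : ∀ i, ZMod (m i)) : ℂ :=
  ∑ k ∈ range (m j), ∑ l ∈ range k, rad m j x ^ l

lemma radSum_congr {x y : ∀ i, ZMod (m i)} {j : ℕ} (h : x j = y j) :
    radSum m j x = radSum m j y := by
  rw [radSum, radSum, rad_congr h]

lemma radSum_of_eq_zero {x : ∀ i, ZMod (m i)} {j : ℕ} (h : x j = 0) : radSum m j x = m j := by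
  simp [radSum, rad, h]

lemma radSum_of_ne_zero {x : ∀ i, ZMod (m i)} {j : ℕ} (h : x j ≠ 0) : radSum m j x = 0 := by
  rcases eq_or_ne (m j) 0 with hmj | hmj
  · rw [radSum, hmj, sum_range_zero]
  · rw [radSum, geom_sum_eq (rad_ne_one hmj h), rad_pow_self, sub_self, zero_div]

lemma norm_geom_sum_rad_le (x : ∀ i, ZMod (m i)) (j k : ℕ) :
    ‖∑ l ∈ range k, rad m j x ^ l‖ ≤ k := by
  refine (norm_sum_le _ _).trans ?_
  simp [norm_rad]

lemma norm_radCumSum_le (x : ∀ i, ZMod (m i)) (j : ℕ) :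
    ‖radCumSum m j x‖ ≤ (m j : ℝ) ^ 2 := by
  calc ‖radCumSum m j x‖ ≤ ∑ k ∈ range (m j), (m j : ℝ) := by
        refine (norm_sum_le _ _).trans (sum_le_sum fun k hk => ?_)
        exact (norm_geom_sum_rad_le x j k).trans (by exact_mod_cast (mem_range.1 hk).le)
    _ = (m j : ℝ) ^ 2 := by rw [sum_const, card_range, nsmul_eq_mul, sq]

lemma norm_Dker_le (x : ∀ i, ZMod (m i)) (n : ℕ) : ‖Dker m n x‖ ≤ n := by
  refine (norm_sum_le _ _).trans ?_
  simp [psi, norm_rad]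

lemma norm_Fejer_le (x : ∀ i, ZMod (m i)) (n : ℕ) : ‖Fejer m n x‖ ≤ n := by
  rw [Fejer, norm_mul, norm_inv, norm_natCast]
  calc (n : ℝ)⁻¹ * ‖∑ k ∈ range n, Dker m k x‖
      ≤ (n : ℝ)⁻¹ * ∑ k ∈ range n, (n : ℝ) := by
        gcongr
        refine (norm_sum_le _ _).trans (sum_le_sum fun k hk => ?_)
        exact (norm_Dker_le x k).trans (by exact_mod_cast (mem_range.1 hk).le)
    _ ≤ n := by
        rw [sum_const, card_range, nsmul_eq_mul]
        rcases Nat.eq_zero_or_pos n with rfl | hn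
        · simp
        · rw [inv_mul_cancel_left₀ (by positivity)]

lemma Dker_mul_Mf (hm : ∀ k, 2 ≤ m k) {j k : ℕ} (hk : k ≤ m j) (x : ∀ i, ZMod (m i)) :
    Dker m (k * Mf m j) x = Dker m (Mf m j) x * ∑ l ∈ range k, rad m j x ^ l := by
  rw [Dker, sum_range_mul_eq_sum_sum, mul_sum]
  refine sum_congr rfl fun l hl => ?_
  rw [Dker, sum_mul]
  refine sum_congr rfl fun q hq => ?_
  rw [psi_mul_Mf_add hm (mem_range.1 hq) ((mem_range.1 hl).trans_le hk), mul_comm]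

lemma Dker_mul_Mf_add (hm : ∀ k, 2 ≤ m k) {j k q : ℕ} (hk : k < m j) (hq : q ≤ Mf m j)
    (x : ∀ i, ZMod (m i)) :
    Dker m (k * Mf m j + q) x = Dker m (k * Mf m j) x + rad m j x ^ k * Dker m q x := by
  rw [Dker, sum_range_add, Dker, Dker, mul_sum]
  exact congrArg _ <|
    sum_congr rfl fun r hr => psi_mul_Mf_add hm ((mem_range.1 hr).trans_le hq) hk x

lemma Dker_Mf_succ (hm : ∀ k, 2 ≤ m k) (j : ℕ) (x : ∀ i, ZMod (m i)) :
    Dker m (Mf m (j + 1)) x = radSum m j x * Dker m (Mf m j) x := by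
  rw [Mf_succ, Dker_mul_Mf hm le_rfl, radSum, mul_comm]

lemma Dker_Mf_eq_prod (hm : ∀ k, 2 ≤ m k) (A : ℕ) (x : ∀ i, ZMod (m i)) :
    Dker m (Mf m A) x = ∏ j ∈ range A, radSum m j x := by
  induction A with
  | zero => rw [Mf, Dker, sum_range_one, psi_zero, prod_range_zero]
  | succ A ih => rw [Dker_Mf_succ hm, ih, prod_range_succ, mul_comm]

lemma Dker_Mf_eq_zero (hm : ∀ k, 2 ≤ m k) {x : ∀ i, ZMod (m i)} {A j : ℕ} (hj : j < A)
    (h : x j ≠ 0) : Dker m (Mf m A) x = 0 :=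
  (Dker_Mf_eq_prod hm A x).trans (prod_eq_zero (mem_range.2 hj) (radSum_of_ne_zero h))

lemma Dker_Mf_of_forall_eq_zero (hm : ∀ k, 2 ≤ m k) {x : ∀ i, ZMod (m i)} {A : ℕ}
    (h : ∀ j < A, x j = 0) : Dker m (Mf m A) x = Mf m A := by
  rw [Dker_Mf_eq_prod hm, Mf_eq_prod_range, Nat.cast_prod]
  exact prod_congr rfl fun j hj => radSum_of_eq_zero (h j (mem_range.1 hj))

lemma Dker_Mf_congr (hm : ∀ k, 2 ≤ m k) {x y : ∀ i, ZMod (m i)} {A : ℕ}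
    (h : ∀ j < A, x j = y j) : Dker m (Mf m A) x = Dker m (Mf m A) y := by
  rw [Dker_Mf_eq_prod hm, Dker_Mf_eq_prod hm]
  exact prod_congr rfl fun j hj => radSum_congr (h j (mem_range.1 hj))

def Sker (m : ℕ → ℕ) (n : ℕ) (x : ∀ i, ZMod (m i)) : ℂ :=
  ∑ k ∈ range n, Dker m k x

lemma Fejer_eq_inv_mul_Sker (n : ℕ) (x : ∀ i, ZMod (m i)) :
    Fejer m n x = (n : ℂ)⁻¹ * Sker m n x := rfl

lemma Sker_Mf_succ (hm : ∀ k, 2 ≤ m k) (j : ℕ) (x : ∀ i, ZMod (m i)) :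
    Sker m (Mf m (j + 1)) x =
      Mf m j * Dker m (Mf m j) x * radCumSum m j x + radSum m j x * Sker m (Mf m j) x := by
  have hblock : ∀ k < m j, ∑ q ∈ range (Mf m j), Dker m (k * Mf m j + q) x =
      Mf m j * Dker m (Mf m j) x * ∑ l ∈ range k, rad m j x ^ l +
        rad m j x ^ k * Sker m (Mf m j) x := by
    intro k hk
    rw [sum_congr rfl fun q hq => by
      rw [Dker_mul_Mf_add hm hk (mem_range.1 hq).le, Dker_mul_Mf hm hk.le],
      sum_add_distrib, sum_const, card_range, nsmul_eq_mul, Sker, ← mul_sum, mul_assoc]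
  rw [Sker, Mf_succ, sum_range_mul_eq_sum_sum,
    sum_congr rfl fun k hk => hblock k (mem_range.1 hk), sum_add_distrib, ← mul_sum, ← sum_mul,
    radCumSum, radSum]

lemma natCast_mul_Sker_Mf (hm : ∀ k, 2 ≤ m k) {x : ∀ i, ZMod (m i)} {t A : ℕ} (ht : t < A)
    (hxt : x t ≠ 0) :
    m t * Sker m (Mf m A) x =
      Mf m t * radCumSum m t x * Dker m (Mf m A) (Function.update x t 0) := by
  have ht' : t + 1 ≤ A := ht
  induction A, ht' using Nat.le_induction with
  | base =>
    rw [Sker_Mf_succ hm, radSum_of_ne_zero hxt, Dker_Mf_succ hm,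
      radSum_of_eq_zero (Function.update_self t 0 x),
      Dker_Mf_congr hm fun j hj => (Function.update_of_ne hj.ne _ _).symm]
    ring
  | succ A hA ih =>
    rw [Sker_Mf_succ hm, Dker_Mf_eq_zero hm hA hxt, Dker_Mf_succ hm,
      radSum_congr (Function.update_of_ne (Nat.ne_of_gt hA) _ _)]
    linear_combination radSum m A x * ih hA

lemma norm_Fejer_Mf_le (hm : ∀ k, 2 ≤ m k) {x : ∀ i, ZMod (m i)} {t A : ℕ} (ht : t < A)
    (hxt : x t ≠ 0) :
    ‖Fejer m (Mf m A) x‖ ≤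
      m t * ((Mf m t : ℝ) / Mf m A * ‖Dker m (Mf m A) (Function.update x t 0)‖) := by
  have hmt : (0 : ℝ) < m t := by exact_mod_cast Nat.zero_lt_two.trans_le (hm t)
  have hS : ‖Sker m (Mf m A) x‖ ≤
      m t * Mf m t * ‖Dker m (Mf m A) (Function.update x t 0)‖ := by
    refine le_of_mul_le_mul_left ?_ hmt
    have key := congrArg norm (natCast_mul_Sker_Mf hm ht hxt)
    simp only [norm_mul, norm_natCast] at key
    rw [key]
    calc (Mf m t : ℝ) * ‖radCumSum m t x‖ * ‖Dker m (Mf m A) (Function.update x t 0)‖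
        ≤ Mf m t * (m t : ℝ) ^ 2 * ‖Dker m (Mf m A) (Function.update x t 0)‖ := by
          gcongr
          exact norm_radCumSum_le x t
      _ = m t * (m t * Mf m t * ‖Dker m (Mf m A) (Function.update x t 0)‖) := by ring
  rw [Fejer_eq_inv_mul_Sker, norm_mul, norm_inv, norm_natCast]
  calc (Mf m A : ℝ)⁻¹ * ‖Sker m (Mf m A) x‖
      ≤ (Mf m A : ℝ)⁻¹ * (m t * Mf m t * ‖Dker m (Mf m A) (Function.update x t 0)‖) := by
        gcongr
    _ = _ := by ring

lemma sub_nsmul_evec_apply_of_ne (x : ∀ i, ZMod (m i)) (v : ℕ) {j s : ℕ} (h : j ≠ s) :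
    (x - v • evec m s) j = x j := by
  simp [evec, h]

lemma sub_val_nsmul_evec_self (x : ∀ i, ZMod (m i)) {t : ℕ} (hmt : m t ≠ 0) :
    x - (x t).val • evec m t = Function.update x t 0 := by
  have : NeZero (m t) := ⟨hmt⟩
  funext j
  rcases eq_or_ne j t with rfl | h
  · rw [Pi.sub_apply, Pi.smul_apply, evec, if_pos rfl, nsmul_one, ZMod.natCast_zmod_val, sub_self,
      Function.update_self]
  · rw [sub_nsmul_evec_apply_of_ne x _ h, Function.update_of_ne h]

def fejerMajorant (m : ℕ → ℕ) (A : ℕ) (x : ∀ j, ZMod (m j)) : ℝ :=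
  ∑ s ∈ range (A + 1), (Mf m s : ℝ) / (Mf m A : ℝ) *
    ∑ v ∈ Icc 1 (m s - 1), ‖Dker m (Mf m A) (x - v • evec m s)‖

lemma fejerMajorant_nonneg (A : ℕ) (x : ∀ j, ZMod (m j)) : 0 ≤ fejerMajorant m A x := by
  unfold fejerMajorant
  positivity

lemma le_fejerMajorant (x : ∀ j, ZMod (m j)) {A s v : ℕ} (hs : s ≤ A)
    (hv : v ∈ Icc 1 (m s - 1)) :
    (Mf m s : ℝ) / Mf m A * ‖Dker m (Mf m A) (x - v • evec m s)‖ ≤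
      fejerMajorant m A x := by
  refine le_trans ?_ (single_le_sum (f := fun s => (Mf m s : ℝ) / (Mf m A : ℝ) *
    ∑ v ∈ Icc 1 (m s - 1), ‖Dker m (Mf m A) (x - v • evec m s)‖)
    (fun i _ => by positivity) (mem_range.2 (Nat.lt_succ_of_le hs)))
  gcongr
  exact single_le_sum (f := fun v => ‖Dker m (Mf m A) (x - v • evec m s)‖)
    (fun _ _ => norm_nonneg _) hv

end Vilenkin

theorem stmt5 (m : ℕ → ℕ) (hm : ∀ k, 2 ≤ m k) (B : ℕ) (hB : ∀ k, m k ≤ B) :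
    ∃ c : ℝ, 0 < c ∧ ∀ (A : ℕ) (x : ∀ j, ZMod (m j)),
      ‖Fejer m (Mf m A) x‖ ≤
        c * ∑ s ∈ Finset.range (A + 1), (Mf m s : ℝ) / (Mf m A : ℝ) *
          ∑ v ∈ Finset.Icc 1 (m s - 1), ‖Dker m (Mf m A) (x - v • evec m s)‖ := by
  have hm0 : ∀ k, 0 < m k := fun k => Nat.zero_lt_two.trans_le (hm k)
  have hB1 : (1 : ℝ) ≤ B := by exact_mod_cast (hm0 0).trans_le (hB 0)
  refine ⟨B, one_pos.trans_le hB1, fun A x => ?_⟩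
  change ‖Fejer m (Mf m A) x‖ ≤ B * fejerMajorant m A x
  by_cases hx : ∃ t < A, x t ≠ 0
  · obtain ⟨t, htA, hxt⟩ := hx
    have : NeZero (m t) := ⟨(hm0 t).ne'⟩
    have hv : (x t).val ∈ Icc 1 (m t - 1) :=
      mem_Icc.2 ⟨ZMod.val_pos.2 hxt, Nat.le_sub_one_of_lt (ZMod.val_lt _)⟩
    calc ‖Fejer m (Mf m A) x‖
        ≤ m t * ((Mf m t : ℝ) / Mf m A *
            ‖Dker m (Mf m A) (x - (x t).val • evec m t)‖) := by
          rw [sub_val_nsmul_evec_self x (hm0 t).ne']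
          exact norm_Fejer_Mf_le hm htA hxt
      _ ≤ B * fejerMajorant m A x :=
          mul_le_mul (by exact_mod_cast hB t) (le_fejerMajorant x htA.le hv) (by positivity)
            (by positivity)
  · push Not at hx
    have hMA : (Mf m A : ℝ) ≠ 0 := by exact_mod_cast (Mf_pos hm0 A).ne'
    calc ‖Fejer m (Mf m A) x‖ ≤ Mf m A := norm_Fejer_le x _
      _ = (Mf m A : ℝ) / Mf m A * ‖Dker m (Mf m A) (x - 1 • evec m A)‖ := by
          rw [div_self hMA, one_mul, Dker_Mf_of_forall_eq_zero hm fun j hj => by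
            rw [sub_nsmul_evec_apply_of_ne x 1 hj.ne, hx j hj], norm_natCast]
      _ ≤ fejerMajorant m A x :=
          le_fejerMajorant x le_rfl (mem_Icc.2 ⟨le_rfl, Nat.le_sub_one_of_lt (hm A)⟩)
      _ ≤ B * fejerMajorant m A x := le_mul_of_one_le_left (fejerMajorant_nonneg A x) hB1
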